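/- In the polynomial ring ℤ[t,z], every common divisor of the three polynomials (1 − t z²)·(1 + t z³)²·(1 − z + z²)², (1 − t z²)·(1 − t z² + 2 t z³ − t z⁴), and (1 + t z³)·(1 − z + z²)²·(1 − z) is a unit (i.e. ±1); equivalently, the greatest common divisor of these three polynomials is 1. -/

import Mathlib

open MvPolynomial

/-- The polynomial ring ℤ[t,z] in two commuting variables. -/
noncomputable abbrev Rtz : Type := MvPolynomial (Fin 2) ℤ

/-- The variable `t` of ℤ[t,z]. -/
noncomputable def tv : Rtz := MvPolynomial.X 0

/-- The variable `z` of ℤ[t,z]. -/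
noncomputable def zv : Rtz := MvPolynomial.X 1

/-!
Modulo `1 + t z³` we have `z³ (1 - t z²) ≡ z³ + z²` and `z³ (1 - t z² (1 - z)²) ≡ z³ + z² (1 - z)²`,
so `z⁶` times the second polynomial is congruent to `z⁴ (1 + z³)`. Hence a common divisor `p` of the
last two polynomials divides the nonzero polynomial `z⁴ (1 + z³) (1 - z + z²)² (1 - z)`, which does
not involve `t`; over a domain `p` cannot involve `t` either. Then `p` is unchanged by `t ↦ 0`,
while the second polynomial becomes `1`, so `p` is a unit of `ℤ[t,z]`, i.e. `±1`.
-/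

namespace MvPolynomial

variable {σ R : Type*}

theorem vars_subset_of_dvd [CommSemiring R] [NoZeroDivisors R] {p f : MvPolynomial σ R}
    (h : p ∣ f) (hf : f ≠ 0) : p.vars ⊆ f.vars := by
  classical
  obtain ⟨q, rfl⟩ := h
  rw [vars_def, vars_def, degrees_mul_eq (left_ne_zero_of_mul hf) (right_ne_zero_of_mul hf),
    Multiset.toFinset_add]
  exact Finset.subset_union_left

theorem notMem_vars_rename {τ : Type*} [CommSemiring R] {f : σ → τ} {i : τ}
    (hi : i ∉ Set.range f) (φ : MvPolynomial σ R) : i ∉ (rename f φ).vars := fun h ↦ by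
  obtain ⟨j, -, rfl⟩ := mem_vars_rename f φ h
  exact hi ⟨j, rfl⟩

theorem aeval_update_zero_of_notMem_vars [CommSemiring R] [DecidableEq σ] {p : MvPolynomial σ R}
    {i : σ} (hi : i ∉ p.vars) : aeval (Function.update (X : σ → MvPolynomial σ R) i 0) p = p := by
  conv_rhs => rw [← aeval_X_left_apply p]
  refine hom_congr_vars (f₁ := (aeval (Function.update X i 0)).toRingHom)
    (f₂ := (aeval X).toRingHom) (by ext; simp) (fun j hj _ ↦ ?_) rfl
  have hji : j ≠ i := fun h ↦ hi (h ▸ hj)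
  simp [Function.update_of_ne hji]

theorem isUnit_of_dvd_of_aeval_update_zero_eq_one [CommSemiring R] [DecidableEq σ]
    {p f : MvPolynomial σ R} {i : σ} (h : p ∣ f) (hi : i ∉ p.vars)
    (hf : aeval (Function.update (X : σ → MvPolynomial σ R) i 0) f = 1) : IsUnit p := by
  obtain ⟨q, rfl⟩ := h
  refine IsUnit.of_mul_eq_one (aeval (Function.update X i 0) q) ?_
  rwa [map_mul, aeval_update_zero_of_notMem_vars hi] at hf

theorem eq_one_or_eq_neg_one_of_isUnit {p : MvPolynomial σ ℤ} (hp : IsUnit p) :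
    p = 1 ∨ p = -1 := by
  obtain ⟨r, hr, rfl⟩ := isUnit_iff_eq_C_of_isReduced.mp hp
  rcases Int.isUnit_iff.mp hr with rfl | rfl <;> simp

end MvPolynomial

/-- Every common divisor in ℤ[t,z] of the three polynomials
`(1-tz²)·(1+tz³)²·(1-z+z²)²`, `(1-tz²)·(1-tz²+2tz³-tz⁴)` and `(1+tz³)·(1-z+z²)²·(1-z)`
is a unit, i.e. equals `±1`; equivalently, the greatest common divisor of these three
polynomials is `1`. -/
theorem gcd_three_quotients_n_four_is_one :
    ∀ p : Rtz,
      p ∣ (1 - tv * zv ^ 2) * (1 + tv * zv ^ 3) ^ 2 * (1 - zv + zv ^ 2) ^ 2 →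
      p ∣ (1 - tv * zv ^ 2) * (1 - tv * zv ^ 2 + 2 * tv * zv ^ 3 - tv * zv ^ 4) →
      p ∣ (1 + tv * zv ^ 3) * (1 - zv + zv ^ 2) ^ 2 * (1 - zv) →
      p = 1 ∨ p = -1 := by
  intro p _ hB hC
  set z : MvPolynomial (Fin 1) ℤ := X 0
  set F : Rtz := rename Fin.succ (z ^ 4 * (1 + z ^ 3) * (1 - z + z ^ 2) ^ 2 * (1 - z))
  have hzv : zv = rename Fin.succ z := by simp [zv, z]
  have hF : p ∣ F := by
    have hcomb : F =
        zv ^ 6 * (1 - zv + zv ^ 2) ^ 2 * (1 - zv) *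
            ((1 - tv * zv ^ 2) * (1 - tv * zv ^ 2 + 2 * tv * zv ^ 3 - tv * zv ^ 4)) +
          zv ^ 4 * ((1 - zv) ^ 2 * (1 + zv) + zv - tv * zv ^ 3 * (1 - zv) ^ 2) *
            ((1 + tv * zv ^ 3) * (1 - zv + zv ^ 2) ^ 2 * (1 - zv)) := by
      simp only [F, hzv, map_mul, map_pow, map_add, map_sub, map_one]
      ring
    rw [hcomb]
    exact dvd_add (dvd_mul_of_dvd_right hB _) (dvd_mul_of_dvd_right hC _)
  have hFne : F ≠ 0 := fun h ↦ by
    simpa [F, z] using congrArg (eval fun _ ↦ (2 : ℤ)) h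
  have ht : (0 : Fin 2) ∉ p.vars := fun h ↦
    notMem_vars_rename (by simp) _ (vars_subset_of_dvd hF hFne h)
  refine eq_one_or_eq_neg_one_of_isUnit (isUnit_of_dvd_of_aeval_update_zero_eq_one hB ht ?_)
  simp [tv, zv]
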